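/- With X distributed as in the MDS-coded system (pA + pB + pC = 1, pA + pB > 0, values xλnℓ and xλnℓ ± dℓ with the stated probabilities), the quantity E[X²]/(2E[X]) + ℓ equals λnℓ(1+pC)/(2(1−pC)) + pA·pB·(dℓ)²/(λnℓ(1−pC)) + ℓ. -/

import Mathlib

/-- Average AoI of source S_i in the (n,k)-MDS coded update system:
E[X²]/(2E[X]) + ℓ = λnℓ(1+pC)/(2(1-pC)) + pA pB (dℓ)²/(λnℓ(1-pC)) + ℓ. -/
theorem coded_aoi (pA pB pC lam n ℓ d : ℝ)
    (hA : 0 ≤ pA) (hB : 0 ≤ pB) (hC : 0 ≤ pC)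
    (hsum : pA + pB + pC = 1) (hAB : 0 < pA + pB)
    (hlam : 0 < lam) (hn : 0 < n) (hℓ : 0 < ℓ) (hd : 0 < d) :
    (∑' x : ℕ,
      (((x + 1 : ℝ) * lam * n * ℓ) ^ 2 * (pC ^ x * (pA ^ 2 + pB ^ 2) / (pA + pB))
        + ((x + 1 : ℝ) * lam * n * ℓ + d * ℓ) ^ 2 * (pC ^ x * pA * pB / (pA + pB))
        + ((x + 1 : ℝ) * lam * n * ℓ - d * ℓ) ^ 2 * (pC ^ x * pA * pB / (pA + pB))))
      / (2 * ∑' x : ℕ,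
      (((x + 1 : ℝ) * lam * n * ℓ) * (pC ^ x * (pA ^ 2 + pB ^ 2) / (pA + pB))
        + ((x + 1 : ℝ) * lam * n * ℓ + d * ℓ) * (pC ^ x * pA * pB / (pA + pB))
        + ((x + 1 : ℝ) * lam * n * ℓ - d * ℓ) * (pC ^ x * pA * pB / (pA + pB)))) + ℓ
      = lam * n * ℓ * (1 + pC) / (2 * (1 - pC))
        + pA * pB * (d * ℓ) ^ 2 / (lam * n * ℓ * (1 - pC)) + ℓ := by
  have hpc1 : pC < 1 := by linarith
  have hnorm : ‖pC‖ < 1 := by rw [Real.norm_eq_abs, abs_of_nonneg hC]; exact hpc1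
  have hone : (0:ℝ) < 1 - pC := by linarith
  have h0 : HasSum (fun x : ℕ ↦ pC ^ x) (1 / (1 - pC)) := by
    simpa using hasSum_geometric_of_lt_one hC hpc1
  have h1 : HasSum (fun x : ℕ ↦ ((x : ℝ) + 1) * pC ^ x) (1 / (1 - pC) ^ 2) := by
    have := hasSum_choose_mul_geometric_of_norm_lt_one (𝕜 := ℝ) 1 hnorm
    simpa [Nat.choose_one_right] using this
  have hch2 : HasSum (fun x : ℕ ↦ (((x + 2).choose 2 : ℝ)) * pC ^ x) (1 / (1 - pC) ^ 3) := by
    have := hasSum_choose_mul_geometric_of_norm_lt_one (𝕜 := ℝ) 2 hnorm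
    simpa using this
  have h2 : HasSum (fun x : ℕ ↦ ((x : ℝ) + 1) ^ 2 * pC ^ x)
      ((1 + pC) / (1 - pC) ^ 3) := by
    have h := (hch2.mul_left 2).sub h1
    have heq : (fun x : ℕ ↦ 2 * ((((x + 2).choose 2 : ℝ)) * pC ^ x)
        - ((x : ℝ) + 1) * pC ^ x) = fun x : ℕ ↦ ((x : ℝ) + 1) ^ 2 * pC ^ x := by
      funext x
      have : (((x + 2).choose 2 : ℝ)) = ((x : ℝ) + 2) * ((x : ℝ) + 1) / 2 := by
        have : (x + 2).choose 2 = (x + 2) * (x + 1) / 2 := by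
          rw [Nat.choose_two_right]; congr 1 <;> omega
        rw [this]
        have h2dvd : 2 ∣ (x + 2) * (x + 1) := by simpa [Nat.mul_comm] using (Nat.even_mul_succ_self (x+1)).two_dvd
        rw [Nat.cast_div h2dvd (by norm_num)]
        push_cast; ring
      rw [this]; ring
    have hval : 2 * (1 / (1 - pC) ^ 3) - 1 / (1 - pC) ^ 2 = (1 + pC) / (1 - pC) ^ 3 := by
      field_simp
      ring
    rw [heq, hval] at h
    exact h
  -- closed forms for the two tsums
  set a := lam * n * ℓ with ha
  set e := d * ℓ with he
  have hABne : pA + pB ≠ 0 := ne_of_gt hAB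
  have hK1 : HasSum (fun x : ℕ ↦
      (((x : ℝ) + 1) * a) ^ 2 * (pC ^ x * (pA ^ 2 + pB ^ 2) / (pA + pB))
        + (((x : ℝ) + 1) * a + e) ^ 2 * (pC ^ x * pA * pB / (pA + pB))
        + (((x : ℝ) + 1) * a - e) ^ 2 * (pC ^ x * pA * pB / (pA + pB)))
      ((1 + pC) / (1 - pC) ^ 3 * (a ^ 2 * (pA ^ 2 + pB ^ 2 + 2 * pA * pB) / (pA + pB))
        + 1 / (1 - pC) * (2 * e ^ 2 * pA * pB / (pA + pB))) := by
    have h := (h2.mul_right (a ^ 2 * (pA ^ 2 + pB ^ 2 + 2 * pA * pB) / (pA + pB))).add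
      (h0.mul_right (2 * e ^ 2 * pA * pB / (pA + pB)))
    convert h using 1
    · rfl
    funext x
    field_simp
    ring
  have hK3 : HasSum (fun x : ℕ ↦
      (((x : ℝ) + 1) * a) * (pC ^ x * (pA ^ 2 + pB ^ 2) / (pA + pB))
        + (((x : ℝ) + 1) * a + e) * (pC ^ x * pA * pB / (pA + pB))
        + (((x : ℝ) + 1) * a - e) * (pC ^ x * pA * pB / (pA + pB)))
      (1 / (1 - pC) ^ 2 * (a * (pA ^ 2 + pB ^ 2 + 2 * pA * pB) / (pA + pB))) := by
    have h := h1.mul_right (a * (pA ^ 2 + pB ^ 2 + 2 * pA * pB) / (pA + pB))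
    convert h using 1
    · rfl
    funext x
    field_simp
    ring
  have e1 : (∑' x : ℕ,
      (((x + 1 : ℝ) * lam * n * ℓ) ^ 2 * (pC ^ x * (pA ^ 2 + pB ^ 2) / (pA + pB))
        + ((x + 1 : ℝ) * lam * n * ℓ + d * ℓ) ^ 2 * (pC ^ x * pA * pB / (pA + pB))
        + ((x + 1 : ℝ) * lam * n * ℓ - d * ℓ) ^ 2 * (pC ^ x * pA * pB / (pA + pB))))
      = ((1 + pC) / (1 - pC) ^ 3 * (a ^ 2 * (pA ^ 2 + pB ^ 2 + 2 * pA * pB) / (pA + pB))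
        + 1 / (1 - pC) * (2 * e ^ 2 * pA * pB / (pA + pB))) := by
    rw [← hK1.tsum_eq]
    congr 1
    funext x
    rw [ha, he]; ring_nf
  have e2 : (∑' x : ℕ,
      (((x + 1 : ℝ) * lam * n * ℓ) * (pC ^ x * (pA ^ 2 + pB ^ 2) / (pA + pB))
        + ((x + 1 : ℝ) * lam * n * ℓ + d * ℓ) * (pC ^ x * pA * pB / (pA + pB))
        + ((x + 1 : ℝ) * lam * n * ℓ - d * ℓ) * (pC ^ x * pA * pB / (pA + pB))))
      = (1 / (1 - pC) ^ 2 * (a * (pA ^ 2 + pB ^ 2 + 2 * pA * pB) / (pA + pB))) := by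
    rw [← hK3.tsum_eq]
    congr 1
    funext x
    rw [ha, he]; ring_nf
  rw [e1, e2]
  have hane : a ≠ 0 := by positivity
  have h1mpc : 1 - pC = pA + pB := by linarith
  rw [h1mpc]
  have hsq : pA ^ 2 + pB ^ 2 + 2 * pA * pB = (pA + pB) ^ 2 := by ring
  rw [hsq]
  have h1pc : 1 + pC = 2 - (pA + pB) := by linarith
  rw [h1pc]
  field_simp
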